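/- Let g_ac be a real number, d a real number with 0 < d < 1, p a real number with 0 ≤ p ≤ 1 and d·p < 1, and δ a real number. Set g_0 = g_ac − δ, g_com = g_0/(1 − d), and g_def = g_ac/(1 − d·p). Then g_com > g_def if and only if δ < ((d − d·p)/(1 − d·p))·g_ac. -/
import Mathlib

/-- In the Tit-for-tat repeated data collection game, with roundwise cooperation gain
`g_ac`, discount rate `d ∈ (0,1)`, probability `p ∈ [0,1]` (with `d*p < 1`) that a
defecting adversary is judged as complying, and utility compromise `δ`, setting
`g₀ = g_ac - δ`, `g_com = g₀ / (1 - d)`, `g_def = g_ac / (1 - d*p)`, we have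
`g_com > g_def ↔ δ < ((d - d*p)/(1 - d*p)) * g_ac`. -/
theorem titfortat_comply_iff (g_ac d p δ : ℝ)
    (hd0 : 0 < d) (hd1 : d < 1) (hp0 : 0 ≤ p) (hp1 : p ≤ 1) (hdp : d * p < 1)
    (g₀ g_com g_def : ℝ)
    (hg0 : g₀ = g_ac - δ)
    (hcom : g_com = g₀ / (1 - d))
    (hdef : g_def = g_ac / (1 - d * p)) :
    g_com > g_def ↔ δ < ((d - d * p) / (1 - d * p)) * g_ac := by
  subst hg0 hcom hdef
  have h1 : (0:ℝ) < 1 - d := by linarith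
  have h2 : (0:ℝ) < 1 - d * p := by linarith
  rw [gt_iff_lt, div_lt_div_iff₀ h2 h1, div_mul_eq_mul_div, lt_div_iff₀ h2]
  constructor <;> intro h <;> nlinarith
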